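/- Let n ≥ 1 and let V : ℝⁿ → ℝ be continuous. For φ ∈ C_c^∞(ℝⁿ;ℂ) set q(φ) = ∫_{ℝⁿ}(‖∇φ(x)‖² + V(x)|φ(x)|²)dx, let E = inf{q(φ) : φ ∈ C_c^∞(ℝⁿ;ℂ), ‖φ‖₂ = 1}, and for R > 0 let Σ_R = inf{q(φ) : φ ∈ C_c^∞(ℝⁿ;ℂ), ‖φ‖₂ = 1, φ(x) = 0 whenever |x| < R}. Assume E > −∞. Let j₁, j₂ : ℝ → ℝ be smooth with j₁(t)² + j₂(t)² = 1 for all t, j₁(t) = 1 for t ≤ 1, j₁(t) = 0 for t ≥ 2, and j₂(t) = 0 for t ≤ 1, and set c = sup_t j₁′(t)² + sup_t j₂′(t)². Then for every R > 0 with Σ_R ≥ E and every φ ∈ C_c^∞(ℝⁿ;ℂ) with ‖φ‖₂ = 1, one has q(φ) + (Σ_R − E)·∫_{|x| ≤ 2R}|φ(x)|² dx ≥ Σ_R − c/R². -/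

import Mathlib

open MeasureTheory

/-- The gradient of a complex-valued function `u : ℝⁿ → ℂ` at a point `x`. -/
noncomputable def gradC {n : ℕ} (u : EuclideanSpace ℝ (Fin n) → ℂ)
    (x : EuclideanSpace ℝ (Fin n)) : EuclideanSpace ℂ (Fin n) :=
  (WithLp.equiv 2 (Fin n → ℂ)).symm fun i => fderiv ℝ u x (EuclideanSpace.single i 1)

/-- The quadratic form `q(φ) = ∫ (‖∇φ‖² + V |φ|²)` of the Schrödinger
operator `−Δ + V`. -/
noncomputable def qform {n : ℕ} (V : EuclideanSpace ℝ (Fin n) → ℝ)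
    (φ : EuclideanSpace ℝ (Fin n) → ℂ) : ℝ :=
  ∫ x, (‖gradC φ x‖ ^ 2 + V x * ‖φ x‖ ^ 2)

/-- The set of energies `q(φ)` of normalized test functions `φ ∈ C_c^∞`. -/
def energySet {n : ℕ} (V : EuclideanSpace ℝ (Fin n) → ℝ) : Set ℝ :=
  {e | ∃ φ : EuclideanSpace ℝ (Fin n) → ℂ, ContDiff ℝ (⊤ : ℕ∞) φ ∧
    HasCompactSupport φ ∧ (∫ x, ‖φ x‖ ^ 2) = 1 ∧ e = qform V φ}

/-- The set of energies `q(φ)` of normalized test functions supported in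
`{|x| ≥ R}`. -/
def energySetOutside {n : ℕ} (V : EuclideanSpace ℝ (Fin n) → ℝ) (R : ℝ) : Set ℝ :=
  {e | ∃ φ : EuclideanSpace ℝ (Fin n) → ℂ, ContDiff ℝ (⊤ : ℕ∞) φ ∧
    HasCompactSupport φ ∧ (∫ x, ‖φ x‖ ^ 2) = 1 ∧
    (∀ x, ‖x‖ < R → φ x = 0) ∧ e = qform V φ}

/-! Localize `φ` with the partition of unity `J₁² + J₂² = 1`, `Jₖ(x) = jₖ(|x| / R)`.
Differentiating `J₁² + J₂² = 1` gives `J₁ ∇J₁ + J₂ ∇J₂ = 0`, and with it the IMS formula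
`|∇(J₁φ)|² + |∇(J₂φ)|² = |∇φ|² + (|∇J₁|² + |∇J₂|²) |φ|²`, whence
`q(J₁φ) + q(J₂φ) ≤ q(φ) + c / R²`. Since `J₂φ` vanishes on `|x| < R`, the variational
definitions give `q(J₁φ) ≥ E ‖J₁φ‖²` and `q(J₂φ) ≥ Σ_R ‖J₂φ‖² = Σ_R (1 - ‖J₁φ‖²)`, and
`‖J₁φ‖² ≤ ∫_{|x| ≤ 2R} |φ|²` because `J₁` vanishes beyond `2R`. -/

open Filter Topology

section PartitionOfUnity

variable {E F : Type*} [NormedAddCommGroup E] [NormedSpace ℝ E]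
  [NormedAddCommGroup F] [InnerProductSpace ℝ F]

theorem mul_fderiv_add_mul_fderiv_eq_zero {f g : E → ℝ} {f' g' : E →L[ℝ] ℝ} {x : E}
    (hf : HasFDerivAt f f' x) (hg : HasFDerivAt g g' x) (hfg : ∀ y, f y ^ 2 + g y ^ 2 = 1) :
    f x • f' + g x • g' = 0 := by
  have hsq := (hf.pow 2).fun_add (hg.pow 2)
  rw [show (fun y => f y ^ 2 + g y ^ 2) = fun _ => 1 from funext hfg] at hsq
  have h := hsq.unique (hasFDerivAt_const 1 x)
  ext v
  have hv := congrArg (· v) h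
  simp only [add_apply, smul_apply, smul_eq_mul, zero_apply, nsmul_eq_mul] at hv ⊢
  norm_num at hv
  linarith

theorem sq_norm_smul_add_smul_add_sq_norm_smul_add_smul {p q a b : ℝ} (hpq : p ^ 2 + q ^ 2 = 1)
    (h : p * a + q * b = 0) (z d : F) :
    ‖a • z + p • d‖ ^ 2 + ‖b • z + q • d‖ ^ 2 = ‖d‖ ^ 2 + (a ^ 2 + b ^ 2) * ‖z‖ ^ 2 := by
  simp only [norm_add_sq_real, norm_smul, mul_pow, Real.norm_eq_abs, sq_abs, real_inner_smul_left,
    real_inner_smul_right]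
  linear_combination ‖d‖ ^ 2 * hpq + 2 * inner ℝ z d * h

theorem sq_norm_fderiv_smul_add_sq_norm_fderiv_smul {J₁ J₂ : E → ℝ} {u : E → F} {x : E}
    (hJ₁ : DifferentiableAt ℝ J₁ x) (hJ₂ : DifferentiableAt ℝ J₂ x) (hu : DifferentiableAt ℝ u x)
    (hJ : ∀ y, J₁ y ^ 2 + J₂ y ^ 2 = 1) (v : E) :
    ‖fderiv ℝ (J₁ • u) x v‖ ^ 2 + ‖fderiv ℝ (J₂ • u) x v‖ ^ 2
      = ‖fderiv ℝ u x v‖ ^ 2 + (fderiv ℝ J₁ x v ^ 2 + fderiv ℝ J₂ x v ^ 2) * ‖u x‖ ^ 2 := by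
  have hrel := congrArg (· v)
    (mul_fderiv_add_mul_fderiv_eq_zero hJ₁.hasFDerivAt hJ₂.hasFDerivAt hJ)
  simp only [add_apply, smul_apply, smul_eq_mul, zero_apply] at hrel
  rw [fderiv_smul hJ₁ hu, fderiv_smul hJ₂ hu]
  simp only [add_apply, smul_apply, ContinuousLinearMap.smulRight_apply]
  rw [add_comm (J₁ x • _), add_comm (J₂ x • _)]
  exact sq_norm_smul_add_smul_add_sq_norm_smul_add_smul (hJ x) hrel _ _

theorem sq_norm_fderiv_comp_norm_div_le {j : ℝ → ℝ} (hj : Differentiable ℝ j) {C : ℝ}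
    (hC : ∀ t, deriv j t ^ 2 ≤ C) (R : ℝ) (x : E) :
    ‖fderiv ℝ (fun y => j (‖y‖ / R)) x‖ ^ 2 ≤ C / R ^ 2 := by
  have hC₀ : 0 ≤ C := (sq_nonneg _).trans (hC 0)
  have hlip : ∀ y, ‖j (‖y‖ / R) - j (‖x‖ / R)‖ ≤ √C / |R| * ‖y - x‖ := fun y =>
    calc ‖j (‖y‖ / R) - j (‖x‖ / R)‖ ≤ √C * ‖‖y‖ / R - ‖x‖ / R‖ :=
          Convex.norm_image_sub_le_of_norm_deriv_le (fun t _ => hj t)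
            (fun t _ => Real.abs_le_sqrt (hC t)) convex_univ trivial trivial
      _ = √C / |R| * |‖y‖ - ‖x‖| := by
          rw [Real.norm_eq_abs, ← sub_div, abs_div]; ring
      _ ≤ √C / |R| * ‖y - x‖ := by gcongr; exact abs_norm_sub_norm_le y x
  have h := norm_fderiv_le_of_lip' ℝ (by positivity) (Eventually.of_forall hlip)
  calc ‖fderiv ℝ (fun y => j (‖y‖ / R)) x‖ ^ 2 ≤ (√C / |R|) ^ 2 := by gcongr
    _ = C / R ^ 2 := by rw [div_pow, sq_abs, Real.sq_sqrt hC₀]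

end PartitionOfUnity

theorem contDiff_comp_norm_div {E : Type*} [NormedAddCommGroup E] [InnerProductSpace ℝ E]
    {j : ℝ → ℝ} {m : WithTop ℕ∞} {k : ℝ} (hj : ContDiff ℝ m j) (hj0 : ∀ᶠ t in 𝓝 0, j t = k)
    (R : ℝ) : ContDiff ℝ m fun y : E => j (‖y‖ / R) := by
  refine contDiff_iff_contDiffAt.mpr fun x => ?_
  rcases eq_or_ne x 0 with rfl | hx
  · have hlim : Tendsto (fun y : E => ‖y‖ / R) (𝓝 0) (𝓝 0) := by
      simpa using (continuous_norm.div_const R).tendsto (0 : E)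
    exact contDiffAt_const.congr_of_eventuallyEq (hlim.eventually hj0)
  · exact hj.contDiffAt.comp x ((contDiffAt_norm ℝ hx).div_const R)

section RealCutoff

theorem deriv_eq_zero_of_sq_add_sq_eq_one {f g : ℝ → ℝ} {t : ℝ} (hf : DifferentiableAt ℝ f t)
    (hg : DifferentiableAt ℝ g t) (hfg : ∀ s, f s ^ 2 + g s ^ 2 = 1) (hft : f t = 0) :
    deriv g t = 0 := by
  have hrel := congrArg (· 1)
    (mul_fderiv_add_mul_fderiv_eq_zero hf.hasFDerivAt hg.hasFDerivAt hfg)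
  simp only [add_apply, smul_apply, smul_eq_mul, zero_apply, fderiv_apply_one_eq_deriv, hft,
    zero_mul, zero_add] at hrel
  have hgt : g t ≠ 0 := fun hgt => by simpa [hft, hgt] using hfg t
  exact (mul_eq_zero.mp hrel).resolve_left hgt

theorem deriv_eq_zero_of_eventually_eq {f : ℝ → ℝ} {t k : ℝ} (h : ∀ᶠ s in 𝓝 t, f s = k) :
    deriv f t = 0 := by
  rw [EventuallyEq.deriv_eq (f := fun _ => k) h, deriv_const]

theorem bddAbove_range_sq_deriv {f : ℝ → ℝ} (hf : ContDiff ℝ 1 f) {a b : ℝ}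
    (h : ∀ t ∉ Set.Icc a b, deriv f t = 0) : BddAbove (Set.range fun t => deriv f t ^ 2) :=
  ((hf.continuous_deriv le_rfl).pow 2).bddAbove_range_of_hasCompactSupport <|
    HasCompactSupport.intro (isCompact_Icc (a := a) (b := b)) fun t ht => by simp [h t ht]

variable {j₁ j₂ : ℝ → ℝ}

theorem deriv_cutoff_eq_zero (hj₁ : Differentiable ℝ j₁) (hj₂ : Differentiable ℝ j₂)
    (hsum : ∀ t, j₁ t ^ 2 + j₂ t ^ 2 = 1)
    (hj₁one : ∀ t ≤ (1 : ℝ), j₁ t = 1) (hj₁zero : ∀ t, 2 ≤ t → j₁ t = 0)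
    (hj₂zero : ∀ t ≤ (1 : ℝ), j₂ t = 0) {t : ℝ} (ht : t ∉ Set.Icc 1 2) :
    deriv j₁ t = 0 ∧ deriv j₂ t = 0 := by
  rw [Set.mem_Icc, not_and_or, not_le, not_le] at ht
  rcases ht with ht | ht
  · have hlt : ∀ᶠ s in 𝓝 t, s ≤ 1 := (eventually_lt_nhds ht).mono fun _ => le_of_lt
    exact ⟨deriv_eq_zero_of_eventually_eq (hlt.mono hj₁one),
      deriv_eq_zero_of_eventually_eq (hlt.mono hj₂zero)⟩
  · have hgt : ∀ᶠ s in 𝓝 t, 2 ≤ s := (eventually_gt_nhds ht).mono fun _ => le_of_lt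
    exact ⟨deriv_eq_zero_of_eventually_eq (hgt.mono hj₁zero),
      deriv_eq_zero_of_sq_add_sq_eq_one (hj₁ t) (hj₂ t) hsum (hj₁zero t ht.le)⟩

theorem sq_norm_fderiv_cutoff_add_le {E : Type*} [NormedAddCommGroup E] [NormedSpace ℝ E]
    (hj₁ : ContDiff ℝ 1 j₁) (hj₂ : ContDiff ℝ 1 j₂) (hsum : ∀ t, j₁ t ^ 2 + j₂ t ^ 2 = 1)
    (hj₁one : ∀ t ≤ (1 : ℝ), j₁ t = 1) (hj₁zero : ∀ t, 2 ≤ t → j₁ t = 0)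
    (hj₂zero : ∀ t ≤ (1 : ℝ), j₂ t = 0) (R : ℝ) (x : E) :
    ‖fderiv ℝ (fun y => j₁ (‖y‖ / R)) x‖ ^ 2 + ‖fderiv ℝ (fun y => j₂ (‖y‖ / R)) x‖ ^ 2
      ≤ ((⨆ t, deriv j₁ t ^ 2) + ⨆ t, deriv j₂ t ^ 2) / R ^ 2 := by
  have hd₁ := hj₁.differentiable one_ne_zero
  have hd₂ := hj₂.differentiable one_ne_zero
  have hderiv : ∀ t ∉ Set.Icc (1 : ℝ) 2, deriv j₁ t = 0 ∧ deriv j₂ t = 0 := fun _ =>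
    deriv_cutoff_eq_zero hd₁ hd₂ hsum hj₁one hj₁zero hj₂zero
  rw [add_div]
  exact add_le_add
    (sq_norm_fderiv_comp_norm_div_le hd₁
      (le_ciSup (bddAbove_range_sq_deriv hj₁ fun t ht => (hderiv t ht).1)) R x)
    (sq_norm_fderiv_comp_norm_div_le hd₂
      (le_ciSup (bddAbove_range_sq_deriv hj₂ fun t ht => (hderiv t ht).2)) R x)

end RealCutoff

section Integrals

variable {X F : Type*} [MeasurableSpace X] {μ : Measure X} [NormedAddCommGroup F]

theorem Continuous.integrable_sq_norm [TopologicalSpace X] [OpensMeasurableSpace X]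
    [IsFiniteMeasureOnCompacts μ] {u : X → F} (hu : Continuous u) (hs : HasCompactSupport u) :
    Integrable (fun x => ‖u x‖ ^ 2) μ :=
  Continuous.integrable_of_hasCompactSupport (by fun_prop)
    (hs.comp_left (g := fun z => ‖z‖ ^ 2) (by simp))

theorem eq_zero_of_integral_sq_norm_eq_zero [TopologicalSpace X] [OpensMeasurableSpace X]
    [μ.IsOpenPosMeasure] [IsFiniteMeasureOnCompacts μ] {u : X → F} (hu : Continuous u)
    (hs : HasCompactSupport u) (h : ∫ x, ‖u x‖ ^ 2 ∂μ = 0) : u = 0 := by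
  rw [integral_eq_zero_iff_of_nonneg (fun x => by positivity) (hu.integrable_sq_norm hs),
    Continuous.ae_eq_iff_eq μ (by fun_prop) continuous_zero] at h
  funext x
  simpa using congrFun h x

variable [NormedSpace ℝ F]

theorem sq_norm_smul_add_sq_norm_smul {a b : ℝ} (hab : a ^ 2 + b ^ 2 = 1) (z : F) :
    ‖a • z‖ ^ 2 + ‖b • z‖ ^ 2 = ‖z‖ ^ 2 := by
  simp only [norm_smul, mul_pow, Real.norm_eq_abs, sq_abs, ← add_mul, hab, one_mul]

theorem integral_sq_norm_smul_add_integral_sq_norm_smul [TopologicalSpace X]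
    [OpensMeasurableSpace X] [IsFiniteMeasureOnCompacts μ] {J₁ J₂ : X → ℝ} {u : X → F}
    (hJ₁ : Continuous J₁) (hJ₂ : Continuous J₂) (hu : Continuous u) (hs : HasCompactSupport u)
    (hJ : ∀ x, J₁ x ^ 2 + J₂ x ^ 2 = 1) :
    (∫ x, ‖(J₁ • u) x‖ ^ 2 ∂μ) + ∫ x, ‖(J₂ • u) x‖ ^ 2 ∂μ = ∫ x, ‖u x‖ ^ 2 ∂μ := by
  rw [← integral_add ((hJ₁.smul hu).integrable_sq_norm hs.smul_left)
    ((hJ₂.smul hu).integrable_sq_norm hs.smul_left)]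
  congr with x
  exact sq_norm_smul_add_sq_norm_smul (hJ x) (u x)

theorem integral_sq_norm_smul_le_setIntegral {J : X → ℝ} {u : X → F} {s : Set X}
    (hs : MeasurableSet s) (hu : Integrable (fun x => ‖u x‖ ^ 2) μ) (hJ : ∀ x, J x ^ 2 ≤ 1)
    (hJs : ∀ x ∉ s, J x = 0) : ∫ x, ‖J x • u x‖ ^ 2 ∂μ ≤ ∫ x in s, ‖u x‖ ^ 2 ∂μ := by
  rw [← integral_indicator hs]
  refine integral_mono_of_nonneg (Eventually.of_forall fun x => by positivity) (hu.indicator hs)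
    (Eventually.of_forall fun x => ?_)
  by_cases hx : x ∈ s
  · simp only [Set.indicator_of_mem hx, norm_smul, mul_pow, Real.norm_eq_abs, sq_abs]
    exact mul_le_of_le_one_left (by positivity) (hJ x)
  · simp [hx, hJs x hx]

end Integrals

section QuadraticForm

variable {n : ℕ} {V : EuclideanSpace ℝ (Fin n) → ℝ} {u : EuclideanSpace ℝ (Fin n) → ℂ}

theorem sq_norm_gradC (u : EuclideanSpace ℝ (Fin n) → ℂ) (x : EuclideanSpace ℝ (Fin n)) :
    ‖gradC u x‖ ^ 2 = ∑ i, ‖fderiv ℝ u x (EuclideanSpace.single i 1)‖ ^ 2 :=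
  EuclideanSpace.norm_sq_eq _

theorem sum_sq_apply_single (L : EuclideanSpace ℝ (Fin n) →L[ℝ] ℝ) :
    ∑ i, L (EuclideanSpace.single i 1) ^ 2 = ‖L‖ ^ 2 := by
  have hw : ∀ i, L (EuclideanSpace.single i 1)
      = (InnerProductSpace.toDual ℝ (EuclideanSpace ℝ (Fin n))).symm L i := fun i => by
    rw [← InnerProductSpace.toDual_symm_apply, EuclideanSpace.inner_single_right]; simp
  rw [← LinearIsometryEquiv.norm_map (InnerProductSpace.toDual ℝ _).symm L,
    EuclideanSpace.norm_sq_eq]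
  simp [hw]

theorem gradC_smul (s : ℝ) (u : EuclideanSpace ℝ (Fin n) → ℂ) (x : EuclideanSpace ℝ (Fin n)) :
    gradC (s • u) x = s • gradC u x := by
  ext i
  simp [gradC, fderiv_const_smul_field]

theorem qform_smul (V : EuclideanSpace ℝ (Fin n) → ℝ) (s : ℝ) (u : EuclideanSpace ℝ (Fin n) → ℂ) :
    qform V (s • u) = s ^ 2 * qform V u := by
  simp only [qform, gradC_smul, Pi.smul_apply, norm_smul, mul_pow, Real.norm_eq_abs, sq_abs,
    ← integral_const_mul]
  congr 1 with x
  ring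

theorem sq_norm_gradC_smul_add_sq_norm_gradC_smul {J₁ J₂ : EuclideanSpace ℝ (Fin n) → ℝ}
    {x : EuclideanSpace ℝ (Fin n)} (hJ₁ : DifferentiableAt ℝ J₁ x)
    (hJ₂ : DifferentiableAt ℝ J₂ x) (hu : DifferentiableAt ℝ u x)
    (hJ : ∀ y, J₁ y ^ 2 + J₂ y ^ 2 = 1) :
    ‖gradC (J₁ • u) x‖ ^ 2 + ‖gradC (J₂ • u) x‖ ^ 2
      = ‖gradC u x‖ ^ 2 + (‖fderiv ℝ J₁ x‖ ^ 2 + ‖fderiv ℝ J₂ x‖ ^ 2) * ‖u x‖ ^ 2 := by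
  simp only [sq_norm_gradC, ← sum_sq_apply_single, ← Finset.sum_add_distrib,
    sq_norm_fderiv_smul_add_sq_norm_fderiv_smul hJ₁ hJ₂ hu hJ, Finset.sum_mul]

theorem continuous_sq_norm_gradC (hu : ContDiff ℝ 1 u) : Continuous fun x => ‖gradC u x‖ ^ 2 := by
  simp only [sq_norm_gradC]
  fun_prop

theorem HasCompactSupport.sq_norm_gradC (hu : HasCompactSupport u) :
    HasCompactSupport fun x => ‖gradC u x‖ ^ 2 := by
  simp only [_root_.sq_norm_gradC]
  exact (hu.fderiv (𝕜 := ℝ)).comp_left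
    (g := fun L : EuclideanSpace ℝ (Fin n) →L[ℝ] ℂ => ∑ i, ‖L (EuclideanSpace.single i 1)‖ ^ 2)
    (by simp)

theorem integrable_qform_integrand (hV : Continuous V) (hu : ContDiff ℝ 1 u)
    (hs : HasCompactSupport u) : Integrable fun x => ‖gradC u x‖ ^ 2 + V x * ‖u x‖ ^ 2 :=
  ((continuous_sq_norm_gradC hu).integrable_of_hasCompactSupport hs.sq_norm_gradC).add <|
    Continuous.integrable_of_hasCompactSupport (by fun_prop)
      (hs.comp_left (g := fun z => ‖z‖ ^ 2) (by simp)).mul_left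

theorem qform_smul_add_qform_smul_le (hV : Continuous V) (hu : ContDiff ℝ 1 u)
    (hs : HasCompactSupport u) {J₁ J₂ : EuclideanSpace ℝ (Fin n) → ℝ} (hJ₁ : ContDiff ℝ 1 J₁)
    (hJ₂ : ContDiff ℝ 1 J₂) (hJ : ∀ y, J₁ y ^ 2 + J₂ y ^ 2 = 1) {K : ℝ}
    (hK : ∀ x, ‖fderiv ℝ J₁ x‖ ^ 2 + ‖fderiv ℝ J₂ x‖ ^ 2 ≤ K) :
    qform V (J₁ • u) + qform V (J₂ • u) ≤ qform V u + K * ∫ x, ‖u x‖ ^ 2 := by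
  have h₁ := integrable_qform_integrand hV (hJ₁.smul hu) hs.smul_left
  have h₂ := integrable_qform_integrand hV (hJ₂.smul hu) hs.smul_left
  have h := integrable_qform_integrand hV hu hs
  have hK' := (hu.continuous.integrable_sq_norm (μ := volume) hs).const_mul K
  rw [qform, qform, qform, ← integral_add h₁ h₂, ← integral_const_mul, ← integral_add h hK']
  refine integral_mono (h₁.add h₂) (h.add hK') fun x => ?_
  have hgrad := sq_norm_gradC_smul_add_sq_norm_gradC_smul (hJ₁.differentiable one_ne_zero x)
    (hJ₂.differentiable one_ne_zero x) (hu.differentiable one_ne_zero x) hJ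
  have hmass := sq_norm_smul_add_sq_norm_smul (hJ x) (u x)
  have hKx := mul_le_mul_of_nonneg_right (hK x) (sq_nonneg ‖u x‖)
  dsimp only
  linear_combination hgrad + V x * hmass + hKx

theorem sInf_mul_integral_sq_norm_le_qform {S : Set ℝ} (hS : BddBelow S) (hu : Continuous u)
    (hs : HasCompactSupport u) (hmem : ∀ s : ℝ, ∫ x, ‖(s • u) x‖ ^ 2 = 1 → qform V (s • u) ∈ S) :
    sInf S * ∫ x, ‖u x‖ ^ 2 ≤ qform V u := by
  have hnorm : ∀ s : ℝ, ∫ x, ‖(s • u) x‖ ^ 2 = s ^ 2 * ∫ x, ‖u x‖ ^ 2 := fun s => by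
    simp only [Pi.smul_apply, norm_smul, mul_pow, Real.norm_eq_abs, sq_abs, integral_const_mul]
  set N := ∫ x, ‖u x‖ ^ 2
  have hN0 : 0 ≤ N := integral_nonneg fun x => sq_nonneg ‖u x‖
  rcases hN0.eq_or_lt with hN | hN
  · have hu0 : u = (0 : ℝ) • u := by
      rw [zero_smul, eq_zero_of_integral_sq_norm_eq_zero hu hs hN.symm]
    rw [← hN, mul_zero, hu0, qform_smul]
    simp
  · have hle := csInf_le hS <| hmem (√N)⁻¹ <| by
      rw [hnorm, inv_pow, Real.sq_sqrt hN.le, inv_mul_cancel₀ hN.ne']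
    rw [qform_smul, inv_pow, Real.sq_sqrt hN.le] at hle
    calc sInf S * N ≤ N⁻¹ * qform V u * N := mul_le_mul_of_nonneg_right hle hN.le
      _ = qform V u := by field_simp

theorem energySetOutside_subset_energySet (R : ℝ) : energySetOutside V R ⊆ energySet V :=
  fun _ ⟨w, hw, hws, hwn, _, he⟩ => ⟨w, hw, hws, hwn, he⟩

theorem sInf_energySet_mul_le_qform (hbdd : BddBelow (energySet V)) (hu : ContDiff ℝ (⊤ : ℕ∞) u)
    (hs : HasCompactSupport u) : sInf (energySet V) * ∫ x, ‖u x‖ ^ 2 ≤ qform V u :=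
  sInf_mul_integral_sq_norm_le_qform hbdd hu.continuous hs fun s hs1 =>
    ⟨s • u, contDiff_const.smul hu, hs.smul_left, hs1, rfl⟩

theorem sInf_energySetOutside_mul_le_qform (hbdd : BddBelow (energySet V)) {R : ℝ}
    (hu : ContDiff ℝ (⊤ : ℕ∞) u) (hs : HasCompactSupport u) (hR : ∀ x, ‖x‖ < R → u x = 0) :
    sInf (energySetOutside V R) * ∫ x, ‖u x‖ ^ 2 ≤ qform V u :=
  sInf_mul_integral_sq_norm_le_qform (hbdd.mono (energySetOutside_subset_energySet R))
    hu.continuous hs fun s hs1 =>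
      ⟨s • u, contDiff_const.smul hu, hs.smul_left, hs1, fun x hx => by simp [hR x hx], rfl⟩

end QuadraticForm

theorem IMS_lower_bound_general {n : ℕ}
    (V : EuclideanSpace ℝ (Fin n) → ℝ) (hV : Continuous V)
    (E : ℝ) (hE : E = sInf (energySet V)) (hbdd : BddBelow (energySet V))
    (SigR : ℝ → ℝ) (hSigR : ∀ R, SigR R = sInf (energySetOutside V R))
    (j₁ j₂ : ℝ → ℝ) (hj₁ : ContDiff ℝ (⊤ : ℕ∞) j₁) (hj₂ : ContDiff ℝ (⊤ : ℕ∞) j₂)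
    (hsum : ∀ t, j₁ t ^ 2 + j₂ t ^ 2 = 1)
    (hj₁one : ∀ t ≤ (1 : ℝ), j₁ t = 1) (hj₁zero : ∀ t, 2 ≤ t → j₁ t = 0)
    (hj₂zero : ∀ t ≤ (1 : ℝ), j₂ t = 0)
    (c : ℝ) (hc : c = (⨆ t, (deriv j₁ t) ^ 2) + ⨆ t, (deriv j₂ t) ^ 2)
    (R : ℝ) (hR : 0 < R) (hSigRE : E ≤ SigR R)
    (φ : EuclideanSpace ℝ (Fin n) → ℂ) (hφ : ContDiff ℝ (⊤ : ℕ∞) φ)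
    (hφsupp : HasCompactSupport φ) (hφnorm : (∫ x, ‖φ x‖ ^ 2) = 1) :
    SigR R - c / R ^ 2
      ≤ qform V φ + (SigR R - E) * ∫ x in {x : EuclideanSpace ℝ (Fin n) | ‖x‖ ≤ 2 * R}, ‖φ x‖ ^ 2 := by
  set J₁ : EuclideanSpace ℝ (Fin n) → ℝ := fun y => j₁ (‖y‖ / R)
  set J₂ : EuclideanSpace ℝ (Fin n) → ℝ := fun y => j₂ (‖y‖ / R)
  have hJ : ∀ y, J₁ y ^ 2 + J₂ y ^ 2 = 1 := fun y => hsum _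
  have hnear0 : ∀ᶠ t in 𝓝 (0 : ℝ), t ≤ 1 := (eventually_lt_nhds one_pos).mono fun _ => le_of_lt
  have hJ₁ : ContDiff ℝ (⊤ : ℕ∞) J₁ := contDiff_comp_norm_div hj₁ (hnear0.mono hj₁one) R
  have hJ₂ : ContDiff ℝ (⊤ : ℕ∞) J₂ := contDiff_comp_norm_div hj₂ (hnear0.mono hj₂zero) R
  have hIMS := qform_smul_add_qform_smul_le hV (hφ.of_le (by simp)) hφsupp
    (hJ₁.of_le (by simp)) (hJ₂.of_le (by simp)) hJ fun x => hc ▸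
      sq_norm_fderiv_cutoff_add_le (hj₁.of_le (by simp)) (hj₂.of_le (by simp)) hsum hj₁one
        hj₁zero hj₂zero R x
  have hE₁ : E * ∫ x, ‖(J₁ • φ) x‖ ^ 2 ≤ qform V (J₁ • φ) :=
    hE ▸ sInf_energySet_mul_le_qform hbdd (hJ₁.smul hφ) hφsupp.smul_left
  have hS₂ : SigR R * ∫ x, ‖(J₂ • φ) x‖ ^ 2 ≤ qform V (J₂ • φ) :=
    hSigR R ▸ sInf_energySetOutside_mul_le_qform hbdd (hJ₂.smul hφ) hφsupp.smul_left
      fun x hx => by simp [J₂, hj₂zero _ ((div_lt_one hR).mpr hx).le]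
  have hmass := integral_sq_norm_smul_add_integral_sq_norm_smul (μ := volume) hJ₁.continuous
    hJ₂.continuous hφ.continuous hφsupp hJ
  have hball :
      ∫ x, ‖(J₁ • φ) x‖ ^ 2 ≤ ∫ x in {x : EuclideanSpace ℝ (Fin n) | ‖x‖ ≤ 2 * R}, ‖φ x‖ ^ 2 :=
    integral_sq_norm_smul_le_setIntegral (measurableSet_le (by fun_prop) (by fun_prop))
      (hφ.continuous.integrable_sq_norm hφsupp) (fun x => by linarith [hJ x, sq_nonneg (J₂ x)])
      fun x hx => hj₁zero _ ((le_div_iff₀ hR).mpr (not_le.mp hx).le)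
  rw [hφnorm, mul_one] at hIMS
  linear_combination hIMS + hE₁ + hS₂ + mul_le_mul_of_nonneg_left hball (sub_nonneg.mpr hSigRE)
    - SigR R * (hmass + hφnorm)

/-- IMS lower bound `H + (Σ_R − E)χ_{2R} ≥ Σ_R − c/R²` (quadratic form version
of equation (2.2) of the paper). -/
theorem IMS_lower_bound {n : ℕ} (hn : 1 ≤ n)
    (V : EuclideanSpace ℝ (Fin n) → ℝ) (hV : Continuous V)
    (E : ℝ) (hE : E = sInf (energySet V)) (hbdd : BddBelow (energySet V))
    (SigR : ℝ → ℝ) (hSigR : ∀ R, SigR R = sInf (energySetOutside V R))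
    (j₁ j₂ : ℝ → ℝ) (hj₁ : ContDiff ℝ (⊤ : ℕ∞) j₁) (hj₂ : ContDiff ℝ (⊤ : ℕ∞) j₂)
    (hsum : ∀ t, j₁ t ^ 2 + j₂ t ^ 2 = 1)
    (hj₁one : ∀ t ≤ (1 : ℝ), j₁ t = 1) (hj₁zero : ∀ t, 2 ≤ t → j₁ t = 0)
    (hj₂zero : ∀ t ≤ (1 : ℝ), j₂ t = 0)
    (c : ℝ) (hc : c = (⨆ t, (deriv j₁ t) ^ 2) + ⨆ t, (deriv j₂ t) ^ 2)
    (R : ℝ) (hR : 0 < R) (hSigRE : E ≤ SigR R)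
    (φ : EuclideanSpace ℝ (Fin n) → ℂ) (hφ : ContDiff ℝ (⊤ : ℕ∞) φ)
    (hφsupp : HasCompactSupport φ) (hφnorm : (∫ x, ‖φ x‖ ^ 2) = 1) :
    SigR R - c / R ^ 2
      ≤ qform V φ + (SigR R - E) * ∫ x in {x : EuclideanSpace ℝ (Fin n) | ‖x‖ ≤ 2 * R}, ‖φ x‖ ^ 2 :=
  IMS_lower_bound_general V hV E hE hbdd SigR hSigR j₁ j₂ hj₁ hj₂ hsum hj₁one hj₁zero hj₂zero c hc R
    hR hSigRE φ hφ hφsupp hφnorm
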